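/- Let P be a submonoid of a (discrete) group G. Suppose that for every finite family a_1, …, a_m of neutral words over P and all scalars λ_1, …, λ_m ∈ ℂ one has ‖Σ_{i=1}^m λ_i L̇_{a_i}‖_{B(ℓ²(P))} = ‖Σ_{i=1}^m λ_i L̄̇_{a_i}‖_{B(ℋ̄)} (i.e., the canonical map from the unit fiber of C*_s(P) ≅ 𝒯̄(P) onto the unit fiber of 𝒯_λ(P) is injective). Then P satisfies independence: whenever a constructible ideal K(a) equals a finite union K(a_1) ∪ … ∪ K(a_n) of constructible ideals, K(a) = K(a_i) for some i. -/

import Mathlib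

noncomputable section
set_option synthInstance.maxHeartbeats 1000000
set_option maxHeartbeats 1000000
set_option linter.unusedVariables false

open scoped ENNReal

/-- `ℓ²(ι)` with complex coefficients. -/
abbrev l2 (ι : Type*) : Type _ := lp (fun _ : ι => ℂ) 2

/-- The canonical orthonormal basis vector `δ_i` of `ℓ²(ι)`. -/
noncomputable def ket {ι : Type*} (i : ι) : l2 ι :=
  haveI := Classical.decEq ι
  lp.single 2 i 1

variable {G : Type*} [Group G]

/-- A word `a = (p₁, p₂, …, p_{2k-1}, p_{2k})` of even length over `P`, recorded as the list of
its consecutive pairs `(p₁,p₂), (p₃,p₄), …, (p_{2k-1},p_{2k})`. -/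
abbrev Word (P : Submonoid G) := List (P × P)

/-- `ȧ = p₁⁻¹ p₂ ⋯ p_{2k-1}⁻¹ p_{2k} ∈ G`. -/
def wordElem (P : Submonoid G) (w : Word P) : G :=
  (w.map (fun pq => ((pq.1 : G))⁻¹ * (pq.2 : G))).prod

/-- A word is neutral if `ȧ = e`. -/
def IsNeutral (P : Submonoid G) (w : Word P) : Prop := wordElem P w = 1

/-- `V̇_a = V_{p₁}^* V_{p₂} ⋯ V_{p_{2k-1}}^* V_{p_{2k}}`. -/
def dotted {A : Type*} [Monoid A] [Star A] (P : Submonoid G) (V : P → A) (w : Word P) : A :=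
  (w.map (fun pq => star (V pq.1) * V pq.2)).prod

/-- The constructible right ideal `K(a) = {p ∈ P : L̇_a δ_p = δ_p}`, where `L` is the left
regular representation of `P` on `ℓ²(P)`. -/
def KIdeal (P : Submonoid G) (L : P → (l2 P →L[ℂ] l2 P)) (w : Word P) : Set P :=
  {p : P | dotted P L w (ket p) = ket p}

/-- The index set `X = ⨿_{n ≥ 1} Pⁿ` underlying `ℋ̄ = ⊕_{n≥1} ℓ²(P)^{⊗n} ≅ ℓ²(X)`. -/
abbrev PTuples (P : Submonoid G) := Σ n : ℕ, Fin (n + 1) → P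

/-- Coordinatewise left multiplication of a tuple by `p`; `L̄_p δ_x = δ_{p • x}`. -/
def pMul (P : Submonoid G) (p : P) (x : PTuples P) : PTuples P := ⟨x.1, fun i => p * x.2 i⟩

/-! For a neutral word `w`, `L̇_w` is the projection onto `ℓ²(K(w))` and `L̄̇_w` the projection
onto the span of the tuples all of whose entries lie in `K(w)`. If `K(a) = ⋃ K(bᵢ)` but
`K(a) ≠ K(bᵢ)` for every `i`, pick `cᵢ ∈ K(a) \ K(bᵢ)`. Let `I` index the neutral `bᵢ` (the
others have `K(bᵢ) = ∅`). By inclusion–exclusion the operator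
`∑_{S ⊆ I} (-1)^|S| L̇_a ∏_{i ∈ S} L̇_{bᵢ}` is the projection onto `K(a) \ ⋃_{i ∈ I} K(bᵢ) = ∅`,
whereas the same combination of `L̄` fixes `δ_{(cᵢ)ᵢ}`; so their norms differ. -/

open Function Finset

section Ket

variable {ι : Type*}

lemma ket_eq_single [DecidableEq ι] (i : ι) : ket i = lp.single 2 i (1 : ℂ) := by
  unfold ket
  congr!

lemma ket_apply [DecidableEq ι] (i j : ι) : (ket i : l2 ι) j = if j = i then 1 else 0 := by
  rw [ket_eq_single, lp.single_apply, Pi.single_apply]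

lemma ket_injective : Injective (ket : ι → l2 ι) := by
  classical
  intro i j h
  simpa [ket_apply] using congr($h i)

lemma ket_ne_zero (i : ι) : (ket i : l2 ι) ≠ 0 := by
  classical
  intro h
  simpa [ket_apply] using congr($h i)

lemma inner_ket_left (i : ι) (f : l2 ι) : inner ℂ (ket i) f = f i := by
  classical
  simp [ket_eq_single, lp.inner_single_left]

lemma ContinuousLinearMap.ext_ket {E : Type*} [NormedAddCommGroup E] [NormedSpace ℂ E]
    {A B : l2 ι →L[ℂ] E} (h : ∀ i, A (ket i) = B (ket i)) : A = B := by
  classical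
  ext x
  have hx := lp.hasSum_single (E := fun _ : ι => ℂ) (p := 2) (by norm_num) x
  refine (hx.mapL A).unique ?_
  convert hx.mapL B using 2 with i
  rw [← mul_one (x i), ← smul_eq_mul, lp.single_smul, ← ket_eq_single, map_smul, map_smul, h]

lemma star_apply_ket {f : ι → ι} (hf : Injective f) {A : l2 ι →L[ℂ] l2 ι}
    (hA : ∀ i, A (ket i) = ket (f i)) (j : ι) :
    star A (ket j) = (partialInv f j).elim 0 ket := by
  classical
  ext i
  rw [← inner_ket_left, ContinuousLinearMap.star_eq_adjoint,
    ContinuousLinearMap.adjoint_inner_right, hA, inner_ket_left, ket_apply]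
  have hinv := hf.isPartialInv
  rcases h : partialInv f j with _ | k
  · have : f i ≠ j := fun hij => by simp [(hinv i j).mpr hij] at h
    simp [this]
  · obtain rfl := (hinv k j).mp h
    simp [ket_apply, hf.eq_iff]

lemma ContinuousLinearMap.sum_smul_apply_ket {α : Type*} (s : Finset α) (c : α → ℂ)
    (T : α → l2 ι →L[ℂ] l2 ι) (C : α → Prop) [DecidablePred C] (x : ι)
    (hT : ∀ a ∈ s, T a (ket x) = if C a then ket x else 0) :
    (∑ a ∈ s, c a • T a) (ket x) = (∑ a ∈ s with C a, c a) • ket x := by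
  rw [_root_.sum_apply, sum_filter, sum_smul]
  refine sum_congr rfl fun a ha => ?_
  rw [smul_apply, hT a ha]
  split_ifs <;> simp

end Ket

section WordAction

variable {P : Submonoid G} {X : Type*} (σ : P → X → X)

/-- How `V̇_w` moves basis vectors when `V_p δ_x = δ_{σ p x}`; `none` stands for the zero vector. -/
def wordAct : Word P → X → Option X
  | [], x => some x
  | pq :: w, x => (wordAct w x).bind fun z => partialInv (σ pq.1) (σ pq.2 z)

variable {σ}

@[simp]
lemma wordAct_nil (x : X) : wordAct σ [] x = some x := rfl

lemma wordAct_cons_eq_some_iff (hσ : ∀ p, Injective (σ p)) (pq : P × P) (w : Word P)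
    (x y : X) :
    wordAct σ (pq :: w) x = some y ↔ ∃ z, wordAct σ w x = some z ∧ σ pq.1 y = σ pq.2 z := by
  simp only [wordAct, Option.bind_eq_some_iff]
  exact exists_congr fun z => and_congr_right fun _ => (hσ pq.1).isPartialInv y _

lemma wordAct_append (u v : Word P) (x : X) :
    wordAct σ (u ++ v) x = (wordAct σ v x).bind (wordAct σ u) := by
  induction u with
  | nil => exact (Option.bind_fun_some _).symm
  | cons pq u ih => simp only [List.cons_append, wordAct, ih, Option.bind_assoc]

lemma dotted_apply_ket (hσ : ∀ p, Injective (σ p)) {V : P → l2 X →L[ℂ] l2 X}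
    (hV : ∀ p x, V p (ket x) = ket (σ p x)) (w : Word P) (x : X) :
    dotted P V w (ket x) = (wordAct σ w x).elim 0 ket := by
  induction w with
  | nil => simp [dotted]
  | cons pq w ih =>
    rw [dotted, List.map_cons, List.prod_cons, ← dotted, mul_apply_eq_comp, ih, wordAct]
    rcases wordAct σ w x with _ | z
    · simp
    · simp [hV, star_apply_ket (hσ pq.1) (hV pq.1)]

lemma dotted_apply_ket_of_fixed [DecidableEq X] (hσ : ∀ p, Injective (σ p))
    {V : P → l2 X →L[ℂ] l2 X}
    (hV : ∀ p x, V p (ket x) = ket (σ p x)) {w : Word P} {x : X}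
    (hfix : ∀ y, wordAct σ w x = some y → y = x) :
    dotted P V w (ket x) = if wordAct σ w x = some x then ket x else 0 := by
  rw [dotted_apply_ket hσ hV]
  rcases h : wordAct σ w x with _ | y
  · simp
  · obtain rfl := hfix y h
    simp

lemma wordAct_pi_eq_some_iff {ι : Type*} (hσ : ∀ p, Injective (σ p)) (w : Word P)
    (f g : ι → X) :
    wordAct (fun p f i => σ p (f i)) w f = some g ↔ ∀ i, wordAct σ w (f i) = some (g i) := by
  have hσ' : ∀ p, Injective (fun (f : ι → X) i => σ p (f i)) := fun p f f' h =>
    funext fun i => hσ p (congr_fun h i)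
  induction w generalizing g with
  | nil => simp [funext_iff]
  | cons pq w ih =>
    simp only [wordAct_cons_eq_some_iff hσ', wordAct_cons_eq_some_iff hσ, ih, funext_iff,
      ← forall_and, Classical.skolem]

lemma wordAct_sigma_mk {ι : Type*} {Y : ι → Type*} (τ : ∀ i, P → Y i → Y i)
    (hτ : ∀ i p, Injective (τ i p)) (w : Word P) (i : ι) (y : Y i) :
    wordAct (fun p => Sigma.map id fun j => τ j p) w ⟨i, y⟩ =
      (wordAct (τ i) w y).map (Sigma.mk i) := by
  have hσ : ∀ p, Injective (Sigma.map id fun j => τ j p) := fun p =>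
    injective_id.sigma_map (hτ · p)
  have partialInv_mk : ∀ p (u : Y i), partialInv (Sigma.map id fun j => τ j p) ⟨i, u⟩ =
      (partialInv (τ i p) u).map (Sigma.mk i) := by
    intro p u
    ext ⟨j, v⟩
    rw [Option.map_eq_some_iff, (hσ p).isPartialInv]
    constructor
    · intro h
      cases h
      exact ⟨v, partialInv_left (hτ j p) v, rfl⟩
    · rintro ⟨v, hv, h⟩
      cases h
      rw [← ((hτ i p).isPartialInv _ _).mp hv]
      rfl
  induction w with
  | nil => rfl
  | cons pq w ih =>
    rw [wordAct, ih, wordAct, Option.bind_map, Option.map_bind]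
    exact congrArg _ (funext fun z => partialInv_mk pq.1 (τ i pq.2 z))

end WordAction

section RegularRepresentation

variable {P : Submonoid G}

lemma isNeutral_append {u v : Word P} (hu : IsNeutral P u) (hv : IsNeutral P v) :
    IsNeutral P (u ++ v) := by
  simp_all [IsNeutral, wordElem]

lemma isNeutral_flatten {l : List (Word P)} (hl : ∀ w ∈ l, IsNeutral P w) :
    IsNeutral P l.flatten := by
  unfold IsNeutral wordElem at *
  rw [List.map_flatten, List.prod_flatten, List.map_map]
  exact List.prod_eq_one (by simpa using hl)

lemma coe_eq_wordElem_mul_of_wordAct_eq_some {w : Word P} {r s : P}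
    (h : wordAct (· * ·) w r = some s) : (s : G) = wordElem P w * r := by
  induction w generalizing s with
  | nil => simp_all [wordElem]
  | cons pq w ih =>
    obtain ⟨z, hz, hmul⟩ := (wordAct_cons_eq_some_iff mul_right_injective pq w r s).mp h
    have hmul : (pq.1 : G) * s = pq.2 * z := congrArg Subtype.val hmul
    rw [eq_inv_mul_iff_mul_eq.mpr hmul, ih hz]
    simp [wordElem, mul_assoc]

lemma eq_of_wordAct_eq_some {w : Word P} (hw : IsNeutral P w) {r s : P}
    (h : wordAct (· * ·) w r = some s) : s = r :=
  Subtype.ext <| by rw [coe_eq_wordElem_mul_of_wordAct_eq_some h, hw, one_mul]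

lemma pMul_injective (p : P) : Injective (pMul P p) := by
  rintro ⟨m, g⟩ ⟨m', g'⟩ h
  dsimp only [pMul] at h
  obtain ⟨rfl, h⟩ := Sigma.mk.inj_iff.mp h
  rw [mul_right_injective (const _ p) (eq_of_heq h)]

lemma wordAct_pMul_mk (w : Word P) {n : ℕ} (f : Fin (n + 1) → P) :
    wordAct (pMul P) w ⟨n, f⟩ = (wordAct (fun p g t => p * g t) w f).map (Sigma.mk n) :=
  wordAct_sigma_mk (fun m p (g : Fin (m + 1) → P) => const _ p * g)
    (fun m p => mul_right_injective (const _ p)) w n f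

variable {L : P → l2 P →L[ℂ] l2 P} (hL : ∀ p q : P, L p (ket q) = ket (p * q))
include hL

lemma mem_KIdeal_iff {w : Word P} {p : P} :
    p ∈ KIdeal P L w ↔ wordAct (· * ·) w p = some p := by
  rw [KIdeal, Set.mem_ofPred_eq, dotted_apply_ket mul_right_injective hL]
  rcases wordAct (· * ·) w p with _ | q
  · simpa using (ket_ne_zero p).symm
  · simp [ket_injective.eq_iff]

lemma isNeutral_of_mem_KIdeal {w : Word P} {p : P} (hp : p ∈ KIdeal P L w) : IsNeutral P w :=
  mul_eq_right.mp (coe_eq_wordElem_mul_of_wordAct_eq_some ((mem_KIdeal_iff hL).mp hp)).symm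

lemma KIdeal_append {u v : Word P} (hv : IsNeutral P v) :
    KIdeal P L (u ++ v) = KIdeal P L u ∩ KIdeal P L v := by
  ext p
  simp only [Set.mem_inter_iff, mem_KIdeal_iff hL, wordAct_append, Option.bind_eq_some_iff]
  constructor
  · rintro ⟨z, hz, hzp⟩
    obtain rfl := eq_of_wordAct_eq_some hv hz
    exact ⟨hzp, hz⟩
  · rintro ⟨hu, hv⟩
    exact ⟨p, hv, hu⟩

lemma KIdeal_flatten {l : List (Word P)} (hl : ∀ w ∈ l, IsNeutral P w) :
    KIdeal P L l.flatten = {p | ∀ w ∈ l, p ∈ KIdeal P L w} := by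
  induction l with
  | nil => ext p; simp [mem_KIdeal_iff hL]
  | cons w l ih =>
    rw [List.flatten_cons, KIdeal_append hL (isNeutral_flatten fun v hv => hl v (.tail w hv)),
      ih fun v hv => hl v (.tail w hv)]
    ext p
    simp

lemma dotted_L_apply_ket_of_isNeutral {w : Word P} (hw : IsNeutral P w) (p : P)
    [Decidable (p ∈ KIdeal P L w)] :
    dotted P L w (ket p) = if p ∈ KIdeal P L w then ket p else 0 := by
  classical
  rw [dotted_apply_ket_of_fixed mul_right_injective hL fun q => eq_of_wordAct_eq_some hw]
  simp only [mem_KIdeal_iff hL]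

lemma dotted_Lbar_apply_ket_of_isNeutral {Lbar : P → l2 (PTuples P) →L[ℂ] l2 (PTuples P)}
    (hLbar : ∀ p x, Lbar p (ket x) = ket (pMul P p x)) {w : Word P} (hw : IsNeutral P w)
    {n : ℕ} (f : Fin (n + 1) → P) [Decidable (∀ t, f t ∈ KIdeal P L w)] :
    dotted P Lbar w (ket ⟨n, f⟩) = if ∀ t, f t ∈ KIdeal P L w then ket ⟨n, f⟩ else 0 := by
  rw [dotted_apply_ket pMul_injective hLbar, wordAct_pMul_mk]
  have hpi := wordAct_pi_eq_some_iff (ι := Fin (n + 1)) mul_right_injective w f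
  rcases h : wordAct (fun p g t => p * g t) w f with _ | g
  · have hf : ¬ ∀ t, f t ∈ KIdeal P L w := fun hf => by
      simp [(hpi f).mpr fun t => (mem_KIdeal_iff hL).mp (hf t)] at h
    simp [h, hf]
  · have hgf : g = f := funext fun t => eq_of_wordAct_eq_some hw ((hpi g).mp h t)
    have hK : ∀ t, f t ∈ KIdeal P L w := fun t => (mem_KIdeal_iff hL).mpr (hgf ▸ (hpi g).mp h t)
    simp [h, hgf, hK]

end RegularRepresentation

lemma Finset.sum_powerset_filter_forall_neg_one_pow_card {R ι : Type*} [Ring R]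
    (I : Finset ι) (Q : ι → Prop) [DecidablePred fun S : Finset ι => ∀ i ∈ S, Q i]
    [Decidable (∃ i ∈ I, Q i)] :
    ∑ S ∈ I.powerset with ∀ i ∈ S, Q i, (-1 : R) ^ #S = if ∃ i ∈ I, Q i then 0 else 1 := by
  classical
  have hfilter : {S ∈ I.powerset | ∀ i ∈ S, Q i} = (I.filter Q).powerset := by
    ext S
    simp only [mem_filter, mem_powerset, subset_iff]
    grind
  have hsum := congrArg (Int.cast : ℤ → R) (sum_powerset_neg_one_pow_card (x := I.filter Q))
  push_cast at hsum
  have hempty : I.filter Q = ∅ ↔ ¬∃ i ∈ I, Q i := by simp [filter_eq_empty_iff]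
  rw [hfilter, hsum]
  by_cases h : ∃ i ∈ I, Q i <;> simp [hempty, h]

lemma norm_sum_finset_eq_of_norm_sum_fin_eq {𝕜 α β E F : Type*} [SeminormedAddCommGroup E]
    [SeminormedAddCommGroup F] [SMul 𝕜 E] [SMul 𝕜 F] {Q : β → Prop} {f : β → E} {g : β → F}
    (h : ∀ (m : ℕ) (a : Fin m → β) (c : Fin m → 𝕜), (∀ i, Q (a i)) →
      ‖∑ i, c i • f (a i)‖ = ‖∑ i, c i • g (a i)‖)
    (s : Finset α) (a : α → β) (c : α → 𝕜) (ha : ∀ i ∈ s, Q (a i)) :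
    ‖∑ i ∈ s, c i • f (a i)‖ = ‖∑ i ∈ s, c i • g (a i)‖ := by
  let e := s.equivFin.symm
  rw [← sum_coe_sort s, ← sum_coe_sort s, ← e.sum_comp, ← e.sum_comp]
  exact h _ (fun j => a (e j)) (fun j => c (e j)) fun j => ha _ (e j).2

section InclusionExclusion

variable {P : Submonoid G} {ι : Type*}

def appendWords (a : Word P) (b : ι → Word P) (S : Finset ι) : Word P :=
  a ++ (S.toList.map b).flatten

lemma isNeutral_appendWords {a : Word P} {b : ι → Word P} {S : Finset ι} (ha : IsNeutral P a)
    (hb : ∀ i ∈ S, IsNeutral P (b i)) : IsNeutral P (appendWords a b S) :=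
  isNeutral_append ha <| isNeutral_flatten <| by simpa using hb

variable {L : P → l2 P →L[ℂ] l2 P} (hL : ∀ p q : P, L p (ket q) = ket (p * q))
include hL

lemma mem_KIdeal_appendWords {a : Word P} {b : ι → Word P} {S : Finset ι}
    (hb : ∀ i ∈ S, IsNeutral P (b i)) (p : P) :
    p ∈ KIdeal P L (appendWords a b S) ↔ p ∈ KIdeal P L a ∧ ∀ i ∈ S, p ∈ KIdeal P L (b i) := by
  have hb' : ∀ w ∈ S.toList.map b, IsNeutral P w := by simpa using hb
  rw [appendWords, KIdeal_append hL (isNeutral_flatten hb'), KIdeal_flatten hL hb']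
  simp

lemma sum_smul_dotted_L_appendWords_eq_zero {a : Word P} (ha : IsNeutral P a) {b : ι → Word P}
    {I : Finset ι} (hb : ∀ i ∈ I, IsNeutral P (b i))
    (hcover : ∀ p ∈ KIdeal P L a, ∃ i ∈ I, p ∈ KIdeal P L (b i)) :
    ∑ S ∈ I.powerset, (-1 : ℂ) ^ #S • dotted P L (appendWords a b S) = 0 := by
  classical
  refine ContinuousLinearMap.ext_ket fun p => ?_
  have hbS : ∀ S ∈ I.powerset, ∀ i ∈ S, IsNeutral P (b i) := fun S hS i hi =>
    hb i (mem_powerset.mp hS hi)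
  rw [ContinuousLinearMap.sum_smul_apply_ket _ _ _ _ p fun S hS =>
    dotted_L_apply_ket_of_isNeutral hL (isNeutral_appendWords ha (hbS S hS)) p, zero_apply,
    smul_eq_zero]
  left
  by_cases hp : p ∈ KIdeal P L a
  · rw [filter_congr fun S hS =>
        (mem_KIdeal_appendWords hL (hbS S hS) p).trans (and_iff_right hp),
      sum_powerset_filter_forall_neg_one_pow_card, if_pos (hcover p hp)]
  · rw [filter_congr fun S hS =>
      (mem_KIdeal_appendWords hL (hbS S hS) p).trans (iff_false_intro fun h => hp h.1)]
    simp

lemma sum_smul_dotted_Lbar_appendWords_apply_ket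
    {Lbar : P → l2 (PTuples P) →L[ℂ] l2 (PTuples P)}
    (hLbar : ∀ p x, Lbar p (ket x) = ket (pMul P p x)) {a : Word P} (ha : IsNeutral P a)
    {b : ι → Word P} {I : Finset ι} (hb : ∀ i ∈ I, IsNeutral P (b i)) {n : ℕ}
    {c : Fin (n + 1) → P} (hca : ∀ t, c t ∈ KIdeal P L a)
    (hcb : ∀ i ∈ I, ∃ t, c t ∉ KIdeal P L (b i)) :
    (∑ S ∈ I.powerset, (-1 : ℂ) ^ #S • dotted P Lbar (appendWords a b S)) (ket ⟨n, c⟩) =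
      ket ⟨n, c⟩ := by
  classical
  have hbS : ∀ S ∈ I.powerset, ∀ i ∈ S, IsNeutral P (b i) := fun S hS i hi =>
    hb i (mem_powerset.mp hS hi)
  have hcS : ∀ S ∈ I.powerset, (∀ t, c t ∈ KIdeal P L (appendWords a b S)) ↔
      ∀ i ∈ S, ∀ t, c t ∈ KIdeal P L (b i) := fun S hS => by
    simp only [mem_KIdeal_appendWords hL (hbS S hS), hca, true_and]
    exact ⟨fun h i hi t => h t i hi, fun h t i hi => h i hi t⟩
  rw [ContinuousLinearMap.sum_smul_apply_ket _ _ _ _ _ fun S hS =>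
    dotted_Lbar_apply_ket_of_isNeutral hL hLbar (isNeutral_appendWords ha (hbS S hS)) c,
    filter_congr hcS, sum_powerset_filter_forall_neg_one_pow_card, if_neg, one_smul]
  rintro ⟨i, hi, hc⟩
  obtain ⟨t, ht⟩ := hcb i hi
  exact ht (hc t)

end InclusionExclusion

/-- **(Corollary 4.8.)**  If the canonical map from the unit fiber of `C*_s(P) ≅ 𝒯̄(P)`
onto the unit fiber of `𝒯_λ(P)` is injective — i.e., linear combinations of neutral
monomials have the same norm for `L̄` and for `L` — then `P` satisfies independence. -/
theorem injective_fiber_map_implies_independence (P : Submonoid G)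
    (L : P → (l2 P →L[ℂ] l2 P))
    (hL : ∀ p q : P, L p (ket q) = ket (p * q))
    (Lbar : P → (l2 (PTuples P) →L[ℂ] l2 (PTuples P)))
    (hLbar : ∀ (p : P) (x : PTuples P), Lbar p (ket x) = ket (pMul P p x))
    (hinj : ∀ (m : ℕ) (a : Fin m → Word P) (lam : Fin m → ℂ),
      (∀ i, IsNeutral P (a i)) →
      ‖∑ i, lam i • dotted P L (a i)‖ = ‖∑ i, lam i • dotted P Lbar (a i)‖) :
    ∀ (a : Word P) (n : ℕ) (b : Fin n → Word P), 1 ≤ n →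
      KIdeal P L a = ⋃ i, KIdeal P L (b i) →
      ∃ i, KIdeal P L a = KIdeal P L (b i) := by
  intro a n b hn hcover
  obtain ⟨m, rfl⟩ : ∃ m, n = m + 1 := ⟨n - 1, by omega⟩
  by_contra! hne
  have hwit : ∀ i, ∃ c ∈ KIdeal P L a, c ∉ KIdeal P L (b i) := fun i =>
    Set.not_subset.mp fun h => hne i <| h.antisymm <| by
      rw [hcover]; exact Set.subset_iUnion (fun j => KIdeal P L (b j)) i
  choose c hca hcb using hwit
  have ha : IsNeutral P a := isNeutral_of_mem_KIdeal hL (hca 0)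
  classical
  set I := univ.filter fun i => IsNeutral P (b i)
  have hb : ∀ i ∈ I, IsNeutral P (b i) := fun i hi => (mem_filter.mp hi).2
  have hL_zero := sum_smul_dotted_L_appendWords_eq_zero hL ha hb fun p hp => by
    obtain ⟨i, hi⟩ := Set.mem_iUnion.mp (hcover ▸ hp)
    exact ⟨i, mem_filter.mpr ⟨mem_univ i, isNeutral_of_mem_KIdeal hL hi⟩, hi⟩
  have hLbar_fix := sum_smul_dotted_Lbar_appendWords_apply_ket hL hLbar ha hb hca
    fun i _ => ⟨i, hcb i⟩
  have hnorm := norm_sum_finset_eq_of_norm_sum_fin_eq hinj I.powerset (appendWords a b)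
    (fun S => (-1 : ℂ) ^ #S) fun S hS => isNeutral_appendWords ha fun i hi =>
      hb i (mem_powerset.mp hS hi)
  rw [hL_zero, norm_zero, eq_comm, norm_eq_zero] at hnorm
  exact ket_ne_zero _ (by rw [← hLbar_fix, hnorm, zero_apply])

end
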